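/- With the operators of the type-B₂ positive representation for w₀ = s₂s₁s₂s₁ defined in the context, for all i, j ∈ {1,2} the following operator identities hold on the space of all functions ℂ⁴ → ℂ: K_i ∘ e_j = q_i^{a_ij} · e_j ∘ K_i and K_i ∘ f_j = q_i^{−a_ij} · f_j ∘ K_i, where q₁ = q_s, q₂ = q and (a_ij) is the B₂ Cartan matrix a₁₁ = a₂₂ = 2, a₁₂ = −2, a₂₁ = −1. -/
import Mathlib


noncomputable section

open Complex

/-- The space of operators on all functions `ℂ⁴ → ℂ`. -/
abbrev OpB : Type := Module.End ℂ ((Fin 4 → ℂ) → ℂ)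

/-- Weyl operator `W(ℓ,δ)`: `(W(ℓ,δ) f)(x) = exp(ℓ(x + δ/2)) · f(x + δ)`. -/
def Wop (ℓ : (Fin 4 → ℂ) → ℂ) (δ : Fin 4 → ℂ) : OpB where
  toFun f := fun x => Complex.exp (ℓ (x + (2 : ℂ)⁻¹ • δ)) * f (x + δ)
  map_add' f g := by funext x; simp [mul_add]
  map_smul' c f := by funext x; simp [smul_eq_mul]; ring

/-- `b_s = b/√2`. -/
def bs (b : ℝ) : ℝ := b / Real.sqrt 2

/-- `q = exp(π i b²)`. -/
def qq (b : ℝ) : ℂ := Complex.exp ((Real.pi : ℂ) * Complex.I * (b : ℂ) ^ 2)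

/-- `q_s = exp(π i b_s²)`. -/
def qs (b : ℝ) : ℂ := Complex.exp ((Real.pi : ℂ) * Complex.I * ((bs b : ℝ) : ℂ) ^ 2)

/-- The affine functional `ℓ_α = π (b_s (ct·t + cv·v + cl1·λ₁) + b (cu·u + cw·w + cl2·λ₂))`,
where `(t,u,v,w) = (x 0, x 1, x 2, x 3)`. -/
def ellB (b lam1 lam2 ct cu cv cw cl1 cl2 : ℝ) : (Fin 4 → ℂ) → ℂ := fun x =>
  (Real.pi : ℂ) * (((bs b : ℝ) : ℂ) * (ct * x 0 + cv * x 2 + cl1 * lam1)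
    + (b : ℂ) * (cu * x 1 + cw * x 3 + cl2 * lam2))

/-- The shift vector `δ = (−i b_s d_t, −i b d_u, −i b_s d_v, −i b d_w)`. -/
def deltaB (b dt du dv dw : ℝ) : Fin 4 → ℂ :=
  ![-Complex.I * ((bs b : ℝ) : ℂ) * dt, -Complex.I * (b : ℂ) * du,
    -Complex.I * ((bs b : ℝ) : ℂ) * dv, -Complex.I * (b : ℂ) * dw]

/-- The operator `[α]e(d_t p_t + d_u p_u + d_v p_v + d_w p_w) = W(ℓ_α,δ) + W(−ℓ_α,δ)`. -/
def brB (b lam1 lam2 ct cu cv cw cl1 cl2 dt du dv dw : ℝ) : OpB :=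
  Wop (ellB b lam1 lam2 ct cu cv cw cl1 cl2) (deltaB b dt du dv dw)
    + Wop (fun x => -(ellB b lam1 lam2 ct cu cv cw cl1 cl2 x)) (deltaB b dt du dv dw)

/-- `K₁ = W(π(b_s(2λ₁−2t−2v) + b(u+w)), 0)`. -/
def K1 (b lam1 lam2 : ℝ) : OpB := Wop (ellB b lam1 lam2 (-2) 1 (-2) 1 2 0) 0

/-- `K₁⁻¹`, the multiplication operator with negated exponent. -/
def K1inv (b lam1 lam2 : ℝ) : OpB := Wop (ellB b lam1 lam2 2 (-1) 2 (-1) (-2) 0) 0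

/-- `K₂ = W(π(b(2λ₂−2u−2w) + b_s(2t+2v)), 0)`. -/
def K2 (b lam1 lam2 : ℝ) : OpB := Wop (ellB b lam1 lam2 2 (-2) 2 (-2) 0 2) 0

/-- `K₂⁻¹`, the multiplication operator with negated exponent. -/
def K2inv (b lam1 lam2 : ℝ) : OpB := Wop (ellB b lam1 lam2 (-2) 2 (-2) 2 0 (-2)) 0

/-- `e₁ = [t]e(−p_t)`. -/
def e1 (b lam1 lam2 : ℝ) : OpB := brB b lam1 lam2 1 0 0 0 0 0 (-1) 0 0 0

/-- `e₂ = [w]e(2p_t−2p_v−p_w) + [u−2t]e(−p_u) + (q_s+q_s⁻¹)[v−t]e(p_t−p_u−p_v)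
    + [2v−u]e(2p_t−p_u−2p_v)`. -/
def e2 (b lam1 lam2 : ℝ) : OpB :=
  brB b lam1 lam2 0 0 0 1 0 0 2 0 (-2) (-1)
    + brB b lam1 lam2 (-2) 1 0 0 0 0 0 (-1) 0 0
    + (qs b + (qs b)⁻¹) • brB b lam1 lam2 (-1) 0 1 0 0 0 1 (-1) (-1) 0
    + brB b lam1 lam2 0 (-1) 2 0 0 0 2 (-1) (-2) 0

/-- `f₁ = [2λ₁−v+w]e(p_v) + [2λ₁−t+u−2v+w]e(p_t)`. -/
def f1 (b lam1 lam2 : ℝ) : OpB :=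
  brB b lam1 lam2 0 0 (-1) 1 2 0 0 0 1 0
    + brB b lam1 lam2 (-1) 1 (-2) 1 2 0 1 0 0 0

/-- `f₂ = [2λ₂−w]e(p_w) + [2λ₂−u+2v−2w]e(p_u)`. -/
def f2 (b lam1 lam2 : ℝ) : OpB :=
  brB b lam1 lam2 0 0 0 (-1) 0 2 0 0 0 1
    + brB b lam1 lam2 0 (-1) 2 (-2) 0 2 0 1 0 0

/-- The B₂ Cartan matrix `a₁₁ = a₂₂ = 2, a₁₂ = −2, a₂₁ = −1`. -/
def aB : Fin 2 → Fin 2 → ℤ := ![![2, -2], ![-1, 2]]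

/-- `q₁ = q_s`, `q₂ = q`. -/
def qi (b : ℝ) : Fin 2 → ℂ := ![qs b, qq b]

/-- The pair of `e`-generators. -/
def eOp (b lam1 lam2 : ℝ) : Fin 2 → OpB := ![e1 b lam1 lam2, e2 b lam1 lam2]

/-- The pair of `f`-generators. -/
def fOp (b lam1 lam2 : ℝ) : Fin 2 → OpB := ![f1 b lam1 lam2, f2 b lam1 lam2]

/-- The pair of `K`-generators. -/
def KOp (b lam1 lam2 : ℝ) : Fin 2 → OpB := ![K1 b lam1 lam2, K2 b lam1 lam2]

/-- The pair of inverse `K`-generators. -/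
def KinvOp (b lam1 lam2 : ℝ) : Fin 2 → OpB := ![K1inv b lam1 lam2, K2inv b lam1 lam2]

def cfac (b Ct Cu Cv Cw dt du dv dw : ℝ) : ℂ :=
  Complex.exp ((Real.pi : ℂ) * Complex.I * (b : ℂ) ^ 2 *
    (((Ct : ℂ) * dt + (Cv : ℂ) * dv) / 2 + (Cu : ℂ) * du + (Cw : ℂ) * dw))

lemma bs_sq (b : ℝ) : ((bs b : ℝ) : ℂ) ^ 2 = (b : ℂ) ^ 2 / 2 := by
  have h2 : ((Real.sqrt 2 : ℝ) : ℂ) ^ 2 = 2 := by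
    norm_cast
    rw [Real.sq_sqrt] <;> norm_num
  have hne : ((Real.sqrt 2 : ℝ) : ℂ) ≠ 0 := by
    intro h
    rw [h] at h2; norm_num at h2
  simp only [bs]
  push_cast
  rw [div_pow, h2]

lemma expand_ell (b lam1 lam2 Ct Cu Cv Cw Cl1 Cl2 dt du dv dw : ℝ) (x : Fin 4 → ℂ) :
    Complex.exp (ellB b lam1 lam2 Ct Cu Cv Cw Cl1 Cl2 x)
      = cfac b Ct Cu Cv Cw dt du dv dw *
        Complex.exp (ellB b lam1 lam2 Ct Cu Cv Cw Cl1 Cl2 (x + deltaB b dt du dv dw)) := by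
  rw [cfac, ← Complex.exp_add]
  congr 1
  simp only [ellB, deltaB, Pi.add_apply, Matrix.cons_val_zero, Matrix.cons_val_one,
    Matrix.head_cons, Matrix.cons_val_two, Matrix.tail_cons, Matrix.cons_val_three]
  have hbs := bs_sq b
  linear_combination ((Real.pi : ℂ) * Complex.I * ((Ct : ℂ) * dt + (Cv : ℂ) * dv)) * hbs
lemma commW (m ℓ : (Fin 4 → ℂ) → ℂ) (δ : Fin 4 → ℂ) (c : ℂ)
    (h : ∀ x, Complex.exp (m x) = c * Complex.exp (m (x + δ))) :
    Wop m 0 * Wop ℓ δ = c • (Wop ℓ δ * Wop m 0) := by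
  apply LinearMap.ext; intro f; funext x
  simp only [Wop, Module.End.mul_apply, LinearMap.coe_mk, AddHom.coe_mk, LinearMap.smul_apply,
    Pi.smul_apply, smul_eq_mul, smul_zero, add_zero]
  rw [h x]; ring

lemma commBr (b lam1 lam2 Ct Cu Cv Cw Cl1 Cl2 ct cu cv cw cl1 cl2 dt du dv dw : ℝ) :
    Wop (ellB b lam1 lam2 Ct Cu Cv Cw Cl1 Cl2) 0
        * brB b lam1 lam2 ct cu cv cw cl1 cl2 dt du dv dw
      = cfac b Ct Cu Cv Cw dt du dv dw •
        (brB b lam1 lam2 ct cu cv cw cl1 cl2 dt du dv dw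
          * Wop (ellB b lam1 lam2 Ct Cu Cv Cw Cl1 Cl2) 0) := by
  unfold brB
  rw [mul_add, add_mul, smul_add,
    commW _ _ _ _ (expand_ell b lam1 lam2 Ct Cu Cv Cw Cl1 Cl2 dt du dv dw),
    commW _ _ _ _ (expand_ell b lam1 lam2 Ct Cu Cv Cw Cl1 Cl2 dt du dv dw)]

lemma cfac_eq_q (b Ct Cu Cv Cw dt du dv dw : ℝ) (n : ℤ)
    (h : ((Ct : ℂ) * dt + (Cv : ℂ) * dv) / 2 + (Cu : ℂ) * du + (Cw : ℂ) * dw = (n : ℂ)) :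
    cfac b Ct Cu Cv Cw dt du dv dw = qq b ^ n := by
  rw [cfac, qq, h, ← Complex.exp_int_mul]; ring_nf

lemma cfac_eq_qs (b Ct Cu Cv Cw dt du dv dw : ℝ) (n : ℤ)
    (h : ((Ct : ℂ) * dt + (Cv : ℂ) * dv) + 2 * ((Cu : ℂ) * du + (Cw : ℂ) * dw) = (n : ℂ)) :
    cfac b Ct Cu Cv Cw dt du dv dw = qs b ^ n := by
  rw [cfac, qs, ← Complex.exp_int_mul]
  congr 1
  have hbs := bs_sq b
  linear_combination (-(Real.pi * Complex.I * (n : ℂ))) * hbs +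
    (Real.pi * Complex.I * (b : ℂ)^2 / 2) * h
lemma commBr_qs (b lam1 lam2 Ct Cu Cv Cw Cl1 Cl2 ct cu cv cw cl1 cl2 dt du dv dw : ℝ)
    (n : ℤ)
    (h : ((Ct : ℂ) * dt + (Cv : ℂ) * dv) + 2 * ((Cu : ℂ) * du + (Cw : ℂ) * dw) = (n : ℂ)) :
    Wop (ellB b lam1 lam2 Ct Cu Cv Cw Cl1 Cl2) 0
        * brB b lam1 lam2 ct cu cv cw cl1 cl2 dt du dv dw
      = (qs b ^ n) •
        (brB b lam1 lam2 ct cu cv cw cl1 cl2 dt du dv dw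
          * Wop (ellB b lam1 lam2 Ct Cu Cv Cw Cl1 Cl2) 0) := by
  rw [commBr, cfac_eq_qs b Ct Cu Cv Cw dt du dv dw n h]

lemma commBr_q (b lam1 lam2 Ct Cu Cv Cw Cl1 Cl2 ct cu cv cw cl1 cl2 dt du dv dw : ℝ)
    (n : ℤ)
    (h : ((Ct : ℂ) * dt + (Cv : ℂ) * dv) / 2 + (Cu : ℂ) * du + (Cw : ℂ) * dw = (n : ℂ)) :
    Wop (ellB b lam1 lam2 Ct Cu Cv Cw Cl1 Cl2) 0
        * brB b lam1 lam2 ct cu cv cw cl1 cl2 dt du dv dw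
      = (qq b ^ n) •
        (brB b lam1 lam2 ct cu cv cw cl1 cl2 dt du dv dw
          * Wop (ellB b lam1 lam2 Ct Cu Cv Cw Cl1 Cl2) 0) := by
  rw [commBr, cfac_eq_q b Ct Cu Cv Cw dt du dv dw n h]

/-- `K_i e_j = q_i^{a_ij} e_j K_i` and `K_i f_j = q_i^{−a_ij} f_j K_i`
for the type-B₂ positive representation corresponding to `w₀ = s₂s₁s₂s₁`. -/
theorem B2'_K_relations (b lam1 lam2 : ℝ) (hb0 : 0 < b) (hb1 : b < 1)
    (hirr : Irrational (b ^ 2)) : ∀ i j : Fin 2,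
    KOp b lam1 lam2 i * eOp b lam1 lam2 j
      = (qi b i ^ (aB i j)) • (eOp b lam1 lam2 j * KOp b lam1 lam2 i) ∧
    KOp b lam1 lam2 i * fOp b lam1 lam2 j
      = (qi b i ^ (-(aB i j))) • (fOp b lam1 lam2 j * KOp b lam1 lam2 i) := by
  intro i j
  fin_cases i <;> fin_cases j <;> refine ⟨?_, ?_⟩
  · -- K1 e1
    show K1 b lam1 lam2 * e1 b lam1 lam2 = (qs b ^ (2:ℤ)) • (e1 b lam1 lam2 * K1 b lam1 lam2)
    rw [K1, e1]
    exact commBr_qs b lam1 lam2 (-2) 1 (-2) 1 2 0 1 0 0 0 0 0 (-1) 0 0 0 2 (by norm_num)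
  · -- K1 f1
    show K1 b lam1 lam2 * f1 b lam1 lam2 = (qs b ^ (-2:ℤ)) • (f1 b lam1 lam2 * K1 b lam1 lam2)
    rw [K1, f1, mul_add, add_mul,
      commBr_qs b lam1 lam2 (-2) 1 (-2) 1 2 0 0 0 (-1) 1 2 0 0 0 1 0 (-2) (by norm_num),
      commBr_qs b lam1 lam2 (-2) 1 (-2) 1 2 0 (-1) 1 (-2) 1 2 0 1 0 0 0 (-2) (by norm_num)]
    module
  · -- K1 e2
    show K1 b lam1 lam2 * e2 b lam1 lam2 = (qs b ^ (-2:ℤ)) • (e2 b lam1 lam2 * K1 b lam1 lam2)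
    rw [K1, e2, mul_add, mul_add, mul_add, add_mul, add_mul, add_mul, mul_smul_comm,
      smul_mul_assoc,
      commBr_qs b lam1 lam2 (-2) 1 (-2) 1 2 0 0 0 0 1 0 0 2 0 (-2) (-1) (-2) (by norm_num),
      commBr_qs b lam1 lam2 (-2) 1 (-2) 1 2 0 (-2) 1 0 0 0 0 0 (-1) 0 0 (-2) (by norm_num),
      commBr_qs b lam1 lam2 (-2) 1 (-2) 1 2 0 (-1) 0 1 0 0 0 1 (-1) (-1) 0 (-2) (by norm_num),
      commBr_qs b lam1 lam2 (-2) 1 (-2) 1 2 0 0 (-1) 2 0 0 0 2 (-1) (-2) 0 (-2) (by norm_num)]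
    module
  · -- K1 f2
    show K1 b lam1 lam2 * f2 b lam1 lam2 = (qs b ^ (2:ℤ)) • (f2 b lam1 lam2 * K1 b lam1 lam2)
    rw [K1, f2, mul_add, add_mul,
      commBr_qs b lam1 lam2 (-2) 1 (-2) 1 2 0 0 0 0 (-1) 0 2 0 0 0 1 2 (by norm_num),
      commBr_qs b lam1 lam2 (-2) 1 (-2) 1 2 0 0 (-1) 2 (-2) 0 2 0 1 0 0 2 (by norm_num)]
    module
  · -- K2 e1
    show K2 b lam1 lam2 * e1 b lam1 lam2 = (qq b ^ (-1:ℤ)) • (e1 b lam1 lam2 * K2 b lam1 lam2)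
    rw [K2, e1]
    exact commBr_q b lam1 lam2 2 (-2) 2 (-2) 0 2 1 0 0 0 0 0 (-1) 0 0 0 (-1) (by norm_num)
  · -- K2 f1
    show K2 b lam1 lam2 * f1 b lam1 lam2 = (qq b ^ (1:ℤ)) • (f1 b lam1 lam2 * K2 b lam1 lam2)
    rw [K2, f1, mul_add, add_mul,
      commBr_q b lam1 lam2 2 (-2) 2 (-2) 0 2 0 0 (-1) 1 2 0 0 0 1 0 1 (by norm_num),
      commBr_q b lam1 lam2 2 (-2) 2 (-2) 0 2 (-1) 1 (-2) 1 2 0 1 0 0 0 1 (by norm_num)]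
    module
  · -- K2 e2
    show K2 b lam1 lam2 * e2 b lam1 lam2 = (qq b ^ (2:ℤ)) • (e2 b lam1 lam2 * K2 b lam1 lam2)
    rw [K2, e2, mul_add, mul_add, mul_add, add_mul, add_mul, add_mul, mul_smul_comm,
      smul_mul_assoc,
      commBr_q b lam1 lam2 2 (-2) 2 (-2) 0 2 0 0 0 1 0 0 2 0 (-2) (-1) 2 (by norm_num),
      commBr_q b lam1 lam2 2 (-2) 2 (-2) 0 2 (-2) 1 0 0 0 0 0 (-1) 0 0 2 (by norm_num),
      commBr_q b lam1 lam2 2 (-2) 2 (-2) 0 2 (-1) 0 1 0 0 0 1 (-1) (-1) 0 2 (by norm_num),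
      commBr_q b lam1 lam2 2 (-2) 2 (-2) 0 2 0 (-1) 2 0 0 0 2 (-1) (-2) 0 2 (by norm_num)]
    module
  · -- K2 f2
    show K2 b lam1 lam2 * f2 b lam1 lam2 = (qq b ^ (-2:ℤ)) • (f2 b lam1 lam2 * K2 b lam1 lam2)
    rw [K2, f2, mul_add, add_mul,
      commBr_q b lam1 lam2 2 (-2) 2 (-2) 0 2 0 0 0 (-1) 0 2 0 0 0 1 (-2) (by norm_num),
      commBr_q b lam1 lam2 2 (-2) 2 (-2) 0 2 0 (-1) 2 (-2) 0 2 0 1 0 0 (-2) (by norm_num)]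
    module

end
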